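/- arXiv:1408.0994 — 2 statements merged into one kernel-verified Lean document; each statement's English description precedes it below -/
import Mathlib

section
/- Let Y be a subspace of Kⁿ with Y ∩ im P₁ = {0} and Y + im P₁ = Kⁿ, and let T be a subspace of im P₄ with T ∩ P₄(ker P₂) = {0} and T + P₄(ker P₂) = im P₄. Let L be an n×m matrix over K satisfying: im L = Y; (L·P₃)(ker P₁) = Y; for every v ∈ T there exists u ∈ Kᵐ with P₄u = v and Lv = P₂u; and Lw = 0 for every w ∈ P₄(ker P₂). Then P₁ − L·P₃ is invertible, rank L + r₁ = n, and rank(P₂ − L·P₄) + r₄ = m. -/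
/-!
The conditions on `Y` make `P₁ - L·P₃` injective: if `P₁ v = L P₃ v`, this vector lies in
`Y ∩ im P₁ = 0`, so `v ∈ ker P₁`, and `L·P₃` is injective on `ker P₁` because it maps it onto `Y`,
whose dimension `n - r₁` is that of `ker P₁`. The conditions on `T` and on `L` give
`im (P₂ - L·P₄) = P₂(ker P₄)`, and `P₂` is injective on `ker P₄` since the first block column of
the invertible matrix `P` has trivial kernel; hence `rank (P₂ - L·P₄) = dim ker P₄ = m - r₄`.
-/

open Module LinearMap

theorem Matrix.mulVecLin_sub {R : Type*} [CommRing R] {m n : Type*} [Fintype n]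
    (M N : Matrix m n R) : (M - N).mulVecLin = M.mulVecLin - N.mulVecLin :=
  LinearMap.ext fun _ => Matrix.sub_mulVec _ _ _

theorem Matrix.disjoint_ker_of_injective_fromBlocks {R : Type*} [CommRing R]
    {l m n o : Type*} [Fintype l] [Fintype m]
    {A : Matrix n l R} {B : Matrix n m R} {C : Matrix o l R} {D : Matrix o m R}
    (h : Function.Injective (Matrix.fromBlocks A B C D).mulVec) :
    Disjoint (ker A.mulVecLin) (ker C.mulVecLin) := by
  rw [Submodule.disjoint_def]
  intro u hA hC
  have hzero : (Matrix.fromBlocks A B C D).mulVec (Sum.elim u 0) =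
      (Matrix.fromBlocks A B C D).mulVec 0 := by
    rw [Matrix.mulVec_zero, Matrix.fromBlocks_mulVec]
    simp only [Sum.elim_comp_inl, Sum.elim_comp_inr, Matrix.mulVec_zero, add_zero]
    rw [show A.mulVec u = 0 from hA, show C.mulVec u = 0 from hC, Sum.elim_zero_zero]
  funext i
  exact congrFun (h hzero) (Sum.inl i)

section LinearMaps

variable {R K V W U : Type*}

theorem LinearMap.ker_sub_eq_bot_of_disjoint [Ring R] [AddCommGroup V] [Module R V]
    [AddCommGroup W] [Module R W] {A B : V →ₗ[R] W} {Y : Submodule R W}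
    (hY : Disjoint Y (range A)) (hB : range B ≤ Y) (hAB : Disjoint (ker A) (ker B)) :
    ker (A - B) = ⊥ := by
  rw [eq_bot_iff]
  intro v hv
  have hAB_eq : A v = B v := sub_eq_zero.mp hv
  have hAv : A v = 0 :=
    (Submodule.disjoint_def.mp hY) _ (hAB_eq ▸ hB (mem_range_self B v)) (mem_range_self A v)
  exact (Submodule.disjoint_def.mp hAB) v hAv (mem_ker.mpr (hAB_eq ▸ hAv))

theorem LinearMap.range_sub_comp_eq_map_ker [Ring R] [AddCommGroup V] [Module R V]
    [AddCommGroup W] [Module R W] [AddCommGroup U] [Module R U]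
    {A : V →ₗ[R] U} {C : V →ₗ[R] W} {L : U →ₗ[R] W} {T : Submodule R U}
    (hT : T ⊔ (ker C).map A = range A)
    (hLT : ∀ v ∈ T, ∃ u, A u = v ∧ L v = C u)
    (hLker : ∀ w ∈ (ker C).map A, L w = 0) :
    range (C - L ∘ₗ A) = (ker A).map C := by
  apply le_antisymm
  · rintro _ ⟨u, rfl⟩
    obtain ⟨v, hv, w, hw, hvw⟩ := Submodule.mem_sup.mp (hT.ge (mem_range_self A u))
    obtain ⟨u', hAu', hLv⟩ := hLT v hv
    obtain ⟨z, hz, rfl⟩ := hw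
    refine ⟨u - u' - z, mem_ker.mpr ?_, ?_⟩
    · rw [map_sub, map_sub, hAu', ← hvw]
      abel
    · rw [sub_apply, comp_apply, ← hvw, map_add, hLv, hLker _ ⟨z, hz, rfl⟩, map_sub, map_sub,
        mem_ker.mp hz]
      abel
  · rintro _ ⟨u, hu, rfl⟩
    exact ⟨u, by rw [sub_apply, comp_apply, mem_ker.mp hu, map_zero, sub_zero]⟩

variable [Field K] [AddCommGroup V] [Module K V] [AddCommGroup W] [Module K W]

theorem Submodule.finrank_map_eq_of_disjoint_ker (f : V →ₗ[K] W) {S : Submodule K V}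
    (h : Disjoint S (ker f)) : finrank K (S.map f) = finrank K S := by
  rw [← range_domRestrict]
  exact finrank_range_of_inj (injective_domRestrict_iff.mpr h)

theorem LinearMap.finrank_ker_eq_of_isCompl_range [FiniteDimensional K V] {A : V →ₗ[K] V} {Y : Submodule K V}
    (hY : IsCompl Y (range A)) : finrank K (ker A) = finrank K Y := by
  have := Submodule.finrank_add_eq_of_isCompl hY
  have := finrank_range_add_finrank_ker A
  omega

end LinearMaps

theorem stmt_14_general {K : Type*} [Field K] {m n : ℕ}
    (P₄ : Matrix (Fin m) (Fin m) K) (P₃ : Matrix (Fin m) (Fin n) K)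
    (P₂ : Matrix (Fin n) (Fin m) K) (P₁ : Matrix (Fin n) (Fin n) K)
    (hP : IsUnit (Matrix.fromBlocks P₄ P₃ P₂ P₁))
    (Y : Submodule K (Fin n → K))
    (hY₁ : Y ⊓ LinearMap.range P₁.mulVecLin = ⊥)
    (hY₂ : Y ⊔ LinearMap.range P₁.mulVecLin = ⊤)
    (T : Submodule K (Fin m → K))
    (hT₂ : T ⊔ (LinearMap.ker P₂.mulVecLin).map P₄.mulVecLin =
      LinearMap.range P₄.mulVecLin)
    (L : Matrix (Fin n) (Fin m) K)
    (hL₁ : LinearMap.range L.mulVecLin = Y)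
    (hL₂ : (LinearMap.ker P₁.mulVecLin).map (L * P₃).mulVecLin = Y)
    (hL₃ : ∀ v ∈ T, ∃ u : Fin m → K, P₄.mulVec u = v ∧ L.mulVec v = P₂.mulVec u)
    (hL₄ : ∀ w ∈ (LinearMap.ker P₂.mulVecLin).map P₄.mulVecLin,
      L.mulVec w = 0) :
    IsUnit (P₁ - L * P₃) ∧ L.rank + P₁.rank = n ∧
      (P₂ - L * P₄).rank + P₄.rank = m := by
  have hYc : IsCompl Y (range P₁.mulVecLin) := .of_eq hY₁ hY₂
  refine ⟨?_, ?_, ?_⟩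
  · have hinj : Disjoint (ker P₁.mulVecLin) (ker (L * P₃).mulVecLin) :=
      Submodule.disjoint_ker_of_finrank_le _ <| by
        rw [hL₂, finrank_ker_eq_of_isCompl_range hYc]
    have hrange : range (L * P₃).mulVecLin ≤ Y := by
      rw [Matrix.mulVecLin_mul, ← hL₁]
      exact range_comp_le_range _ _
    rw [← Matrix.mulVec_injective_iff_isUnit, ← Matrix.coe_mulVecLin, ← ker_eq_bot,
      Matrix.mulVecLin_sub]
    exact ker_sub_eq_bot_of_disjoint hYc.disjoint hrange hinj
  · rw [Matrix.rank, hL₁, Matrix.rank, Submodule.finrank_add_eq_of_isCompl hYc, finrank_fin_fun]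
  · have hker : Disjoint (ker P₄.mulVecLin) (ker P₂.mulVecLin) :=
      Matrix.disjoint_ker_of_injective_fromBlocks (Matrix.mulVec_injective_iff_isUnit.mpr hP)
    have hrange : range (P₂ - L * P₄).mulVecLin = (ker P₄.mulVecLin).map P₂.mulVecLin := by
      rw [Matrix.mulVecLin_sub, Matrix.mulVecLin_mul]
      exact range_sub_comp_eq_map_ker hT₂ hL₃ hL₄
    rw [Matrix.rank, hrange, Submodule.finrank_map_eq_of_disjoint_ker _ hker, add_comm,
      Matrix.rank, finrank_range_add_finrank_ker, finrank_fin_fun]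

/-- Lemma (sufficient conditions, case `r₂ ≤ m + n - r₁ - r₄`): if `Y` is a
complement of `im P₁` in `Kⁿ`, `T` is a complement of `P₄(ker P₂)` in `im P₄`,
and `L` satisfies `im L = Y`, `(L·P₃)(ker P₁) = Y`, `Lv ∈ P₂(P₄⁻¹({v}))` for all
`v ∈ T` and `L(P₄(ker P₂)) = {0}`, then `P₁ - L·P₃` is invertible,
`rank L = n - r₁` and `rank (P₂ - L·P₄) = m - r₄`. -/
theorem stmt_14 {K : Type*} [Field K] {m n : ℕ}
    (P₄ : Matrix (Fin m) (Fin m) K) (P₃ : Matrix (Fin m) (Fin n) K)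
    (P₂ : Matrix (Fin n) (Fin m) K) (P₁ : Matrix (Fin n) (Fin n) K)
    (hP : IsUnit (Matrix.fromBlocks P₄ P₃ P₂ P₁))
    (Y : Submodule K (Fin n → K))
    (hY₁ : Y ⊓ LinearMap.range P₁.mulVecLin = ⊥)
    (hY₂ : Y ⊔ LinearMap.range P₁.mulVecLin = ⊤)
    (T : Submodule K (Fin m → K))
    (hT₁ : T ⊓ (LinearMap.ker P₂.mulVecLin).map P₄.mulVecLin = ⊥)
    (hT₂ : T ⊔ (LinearMap.ker P₂.mulVecLin).map P₄.mulVecLin =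
      LinearMap.range P₄.mulVecLin)
    (L : Matrix (Fin n) (Fin m) K)
    (hL₁ : LinearMap.range L.mulVecLin = Y)
    (hL₂ : (LinearMap.ker P₁.mulVecLin).map (L * P₃).mulVecLin = Y)
    (hL₃ : ∀ v ∈ T, ∃ u : Fin m → K, P₄.mulVec u = v ∧ L.mulVec v = P₂.mulVec u)
    (hL₄ : ∀ w ∈ (LinearMap.ker P₂.mulVecLin).map P₄.mulVecLin,
      L.mulVec w = 0) :
    IsUnit (P₁ - L * P₃) ∧ L.rank + P₁.rank = n ∧
      (P₂ - L * P₄).rank + P₄.rank = m :=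
  stmt_14_general P₄ P₃ P₂ P₁ hP Y hY₁ hY₂ T hT₂ L hL₁ hL₂ hL₃ hL₄
end

section
/- Assume r₂ + r₁ + r₄ ≥ m + n. Let W be a subspace of Kⁿ with W ∩ im P₁ = {0} and W + im P₁ = Kⁿ, and let T be a subspace of Kᵐ with T ⊆ im P₄, T ∩ P₄(ker P₂) = {0}, and dim T + r₁ = n. Let L be an n×m matrix over K satisfying: im L = W; (L·P₃)(ker P₁) = W; for every v ∈ T there exists u ∈ Kᵐ with P₄u = v and Lv = P₂u; and Lw = 0 for every w ∈ P₄(ker P₂). Then P₁ − L·P₃ is invertible, rank L + r₁ = n, and rank(P₂ − L·P₄) + n = r₁ + r₂. -/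
/-!
`L P₃` maps `ker P₁` onto `W`, a complement of `im P₁`, which makes `P₁ - L P₃` surjective.
For the last rank, `N = ker (P₂ - L P₄)` contains `ker P₂`, meets `ker P₄` trivially because `P`
is invertible, and `P₄ N` contains `T ⊕ P₄ (ker P₂)`. Hence `dim N ≥ dim T + dim ker P₂`, i.e.
`rank (P₂ - L P₄) ≤ r₁ + r₂ - n`; the reverse inequality comes from `P₂ = (P₂ - L P₄) + L P₄`.
-/

open Module LinearMap

theorem Submodule.finrank_map_of_disjoint_ker {K V V' : Type*} [Field K] [AddCommGroup V]
    [Module K V] [AddCommGroup V'] [Module K V'] (f : V →ₗ[K] V') {p : Submodule K V}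
    (h : Disjoint p (ker f)) : finrank K (p.map f) = finrank K p := by
  rw [← range_domRestrict]
  exact finrank_range_of_inj (injective_domRestrict_iff.mpr h)

/-- `f` embeds `N`, hence also `S ≤ N`, so `T ⊕ f(S)` sits inside `f(N) ≅ N`. -/
theorem Submodule.finrank_add_finrank_le_of_le_map {K V V' : Type*} [Field K] [AddCommGroup V]
    [Module K V] [AddCommGroup V'] [Module K V'] [FiniteDimensional K V]
    [FiniteDimensional K V'] (f : V →ₗ[K] V') {S N : Submodule K V} {T : Submodule K V'}
    (hSN : S ≤ N) (hN : Disjoint N (ker f)) (hTN : T ≤ N.map f) (hTS : Disjoint T (S.map f)) :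
    finrank K T + finrank K S ≤ finrank K N := by
  have hsup := Submodule.finrank_sup_add_finrank_inf_eq T (S.map f)
  rw [disjoint_iff.mp hTS, finrank_bot, add_zero,
    Submodule.finrank_map_of_disjoint_ker f (hN.mono_left hSN)] at hsup
  rw [← hsup, ← Submodule.finrank_map_of_disjoint_ker f hN]
  exact Submodule.finrank_mono (sup_le hTN (Submodule.map_mono hSN))

/-- Write `y = f x + g z`; if `g k = g (x + z)` with `f k = 0`, then `y = (f - g) (x - k)`. -/
theorem LinearMap.surjective_sub_of_range_le_map_ker {R M M' : Type*} [Ring R] [AddCommGroup M]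
    [Module R M] [AddCommGroup M'] [Module R M'] {f g : M →ₗ[R] M'}
    (hsup : range f ⊔ range g = ⊤) (hg : range g ≤ (ker f).map g) :
    Function.Surjective (f - g) := by
  intro y
  obtain ⟨_, ⟨x, rfl⟩, _, ⟨z, rfl⟩, rfl⟩ :=
    Submodule.mem_sup.mp (hsup ▸ Submodule.mem_top (x := y))
  obtain ⟨k, hk, hgk⟩ := hg ⟨x + z, rfl⟩
  refine ⟨x - k, ?_⟩
  simp only [sub_apply, map_sub, mem_ker.mp hk, hgk, map_add]
  abel

namespace Matrix

variable {K : Type*} [Field K] {m n k : Type*}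

theorem rank_add_le [Fintype n] (A B : Matrix m n K) : (A + B).rank ≤ A.rank + B.rank := by
  rw [rank, mulVecLin_add]
  exact (Submodule.finrank_mono (range_add_le _ _)).trans
    (Submodule.finrank_add_le_finrank_add_finrank _ _)

theorem disjoint_ker_of_isUnit_fromBlocks [Fintype m] [Fintype n] [DecidableEq m] [DecidableEq n]
    {A : Matrix m m K} {B : Matrix m n K} {C : Matrix n m K} {D : Matrix n n K}
    (h : IsUnit (fromBlocks A B C D)) :
    Disjoint (ker A.mulVecLin) (ker C.mulVecLin) := by
  rw [disjoint_iff, Submodule.eq_bot_iff]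
  rintro u ⟨hA, hC⟩
  have h0 : (fromBlocks A B C D).mulVec (Sum.elim u 0) = (fromBlocks A B C D).mulVec 0 := by
    rw [fromBlocks_mulVec, mulVec_zero]
    ext (i | i) <;> simp_all
  funext i
  exact congrFun (mulVec_injective_iff_isUnit.mpr h h0) (Sum.inl i)

theorem rank_sub_mul_add_finrank_le [Fintype m] [Fintype k]
    {A : Matrix n m K} {B : Matrix k m K} {L : Matrix n k K}
    (hAB : Disjoint (ker A.mulVecLin) (ker B.mulVecLin)) (T : Submodule K (k → K))
    (hT : Disjoint T ((ker A.mulVecLin).map B.mulVecLin))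
    (hLT : ∀ v ∈ T, ∃ u : m → K, B *ᵥ u = v ∧ L *ᵥ v = A *ᵥ u)
    (hLker : ∀ w ∈ (ker A.mulVecLin).map B.mulVecLin, L *ᵥ w = 0) :
    (A - L * B).rank + finrank K T ≤ A.rank := by
  have hmulVec (u : m → K) : (A - L * B) *ᵥ u = A *ᵥ u - L *ᵥ B *ᵥ u := by
    rw [sub_mulVec, mulVec_mulVec]
  have hker_le : ker A.mulVecLin ≤ ker (A - L * B).mulVecLin := fun u hu => by
    have hAu : A *ᵥ u = 0 := hu
    show (A - L * B) *ᵥ u = 0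
    have hLBu : L *ᵥ B *ᵥ u = 0 := hLker _ ⟨u, hu, rfl⟩
    rw [hmulVec, hAu, hLBu, sub_zero]
  have hdisj : Disjoint (ker (A - L * B).mulVecLin) (ker B.mulVecLin) := by
    refine disjoint_iff_inf_le.mpr fun u ⟨hu, hBu⟩ => (disjoint_iff_inf_le.mp hAB) ⟨?_, hBu⟩
    have hALBu : (A - L * B) *ᵥ u = 0 := hu
    have hBu' : B *ᵥ u = 0 := hBu
    show A *ᵥ u = 0
    rwa [hmulVec, hBu', mulVec_zero, sub_zero] at hALBu
  have hT_le : T ≤ (ker (A - L * B).mulVecLin).map B.mulVecLin := fun v hv => by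
    obtain ⟨u, rfl, hu⟩ := hLT v hv
    refine ⟨u, ?_, rfl⟩
    show (A - L * B) *ᵥ u = 0
    rw [hmulVec, hu, sub_self]
  have hdim := Submodule.finrank_add_finrank_le_of_le_map B.mulVecLin hker_le hdisj hT_le hT
  have hA := finrank_range_add_finrank_ker A.mulVecLin
  have hALB := finrank_range_add_finrank_ker (A - L * B).mulVecLin
  rw [rank, rank]
  omega

end Matrix

theorem stmt_16_general {K : Type*} [Field K] {m n : ℕ}
    (P₄ : Matrix (Fin m) (Fin m) K) (P₃ : Matrix (Fin m) (Fin n) K)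
    (P₂ : Matrix (Fin n) (Fin m) K) (P₁ : Matrix (Fin n) (Fin n) K)
    (hP : IsUnit (Matrix.fromBlocks P₄ P₃ P₂ P₁))
    (W : Submodule K (Fin n → K))
    (hW₁ : W ⊓ LinearMap.range P₁.mulVecLin = ⊥)
    (hW₂ : W ⊔ LinearMap.range P₁.mulVecLin = ⊤)
    (T : Submodule K (Fin m → K))
    (hT₁ : T ⊓ (LinearMap.ker P₂.mulVecLin).map P₄.mulVecLin = ⊥)
    (hT₂ : Module.finrank K T + P₁.rank = n)
    (L : Matrix (Fin n) (Fin m) K)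
    (hL₁ : LinearMap.range L.mulVecLin = W)
    (hL₂ : (LinearMap.ker P₁.mulVecLin).map (L * P₃).mulVecLin = W)
    (hL₃ : ∀ v ∈ T, ∃ u : Fin m → K, P₄.mulVec u = v ∧ L.mulVec v = P₂.mulVec u)
    (hL₄ : ∀ w ∈ (LinearMap.ker P₂.mulVecLin).map P₄.mulVecLin,
      L.mulVec w = 0) :
    IsUnit (P₁ - L * P₃) ∧ L.rank + P₁.rank = n ∧
      (P₂ - L * P₄).rank + n = P₁.rank + P₂.rank := by
  have hrankL : L.rank + P₁.rank = n := by
    rw [Matrix.rank, Matrix.rank, hL₁, Submodule.finrank_add_eq_of_isCompl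
      ⟨disjoint_iff.mpr hW₁, codisjoint_iff.mpr hW₂⟩, finrank_fin_fun]
  have hrangeLP₃ : range (L * P₃).mulVecLin = W := by
    refine le_antisymm ?_ (hL₂ ▸ map_le_range)
    rw [← hL₁, Matrix.mulVecLin_mul]
    exact range_comp_le_range _ _
  have hunit : IsUnit (P₁ - L * P₃) := by
    have hsurj :=
      surjective_sub_of_range_le_map_ker (f := P₁.mulVecLin) (g := (L * P₃).mulVecLin)
        (by rwa [hrangeLP₃, sup_comm]) (by rw [hrangeLP₃, hL₂])
    rw [← Matrix.mulVec_surjective_iff_isUnit]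
    convert hsurj using 1
    ext u : 1
    simp [Matrix.sub_mulVec]
  have hrank_le := Matrix.rank_sub_mul_add_finrank_le
    (Matrix.disjoint_ker_of_isUnit_fromBlocks hP).symm T
    (disjoint_iff.mpr hT₁) hL₃ hL₄
  have hrank_ge : P₂.rank ≤ (P₂ - L * P₄).rank + L.rank :=
    calc P₂.rank = ((P₂ - L * P₄) + L * P₄).rank := by rw [sub_add_cancel]
      _ ≤ (P₂ - L * P₄).rank + (L * P₄).rank := Matrix.rank_add_le _ _
      _ ≤ (P₂ - L * P₄).rank + L.rank := Nat.add_le_add_left (Matrix.rank_mul_le_left _ _) _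
  exact ⟨hunit, hrankL, by omega⟩

/-- Lemma (sufficient conditions, case `r₂ ≥ m + n - r₁ - r₄`): if `W` is a
complement of `im P₁` in `Kⁿ`, `T ⊆ im P₄` satisfies `T ∩ P₄(ker P₂) = {0}`
and `dim T = n - r₁`, and `L` satisfies `im L = W`, `(L·P₃)(ker P₁) = W`,
`Lv ∈ P₂(P₄⁻¹({v}))` for all `v ∈ T` and `L(P₄(ker P₂)) = {0}`, then
`P₁ - L·P₃` is invertible, `rank L = n - r₁` and
`rank (P₂ - L·P₄) = r₁ + r₂ - n`. -/
theorem stmt_16 {K : Type*} [Field K] {m n : ℕ}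
    (P₄ : Matrix (Fin m) (Fin m) K) (P₃ : Matrix (Fin m) (Fin n) K)
    (P₂ : Matrix (Fin n) (Fin m) K) (P₁ : Matrix (Fin n) (Fin n) K)
    (hP : IsUnit (Matrix.fromBlocks P₄ P₃ P₂ P₁))
    (hr : P₂.rank + P₁.rank + P₄.rank ≥ m + n)
    (W : Submodule K (Fin n → K))
    (hW₁ : W ⊓ LinearMap.range P₁.mulVecLin = ⊥)
    (hW₂ : W ⊔ LinearMap.range P₁.mulVecLin = ⊤)
    (T : Submodule K (Fin m → K))
    (hT₀ : T ≤ LinearMap.range P₄.mulVecLin)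
    (hT₁ : T ⊓ (LinearMap.ker P₂.mulVecLin).map P₄.mulVecLin = ⊥)
    (hT₂ : Module.finrank K T + P₁.rank = n)
    (L : Matrix (Fin n) (Fin m) K)
    (hL₁ : LinearMap.range L.mulVecLin = W)
    (hL₂ : (LinearMap.ker P₁.mulVecLin).map (L * P₃).mulVecLin = W)
    (hL₃ : ∀ v ∈ T, ∃ u : Fin m → K, P₄.mulVec u = v ∧ L.mulVec v = P₂.mulVec u)
    (hL₄ : ∀ w ∈ (LinearMap.ker P₂.mulVecLin).map P₄.mulVecLin,
      L.mulVec w = 0) :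
    IsUnit (P₁ - L * P₃) ∧ L.rank + P₁.rank = n ∧
      (P₂ - L * P₄).rank + n = P₁.rank + P₂.rank :=
  stmt_16_general P₄ P₃ P₂ P₁ hP W hW₁ hW₂ T hT₁ hT₂ L hL₁ hL₂ hL₃ hL₄
end
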